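/- The element 1⊗1⊗1 ∈ A⊗A⊗A is a canonical R-matrix if and only if the unit map k → A is an epimorphism in the category of rings (equivalently, a⊗1 = 1⊗a in A⊗_k A for all a ∈ A). -/

import Mathlib

/-! Multiplying the last two factors of `A ⊗ A ⊗ A` retracts `x ↦ x ⊗ 1`, so the centralizing
condition `a ⊗ 1 ⊗ 1 = 1 ⊗ a ⊗ 1` already forces `a ⊗ 1 = 1 ⊗ a`. Conversely, once `a ⊗ 1 = 1 ⊗ a`,
every centralizing condition holds, the hexagon identities are trivial, and `1 ⊗ 1 ⊗ 1` is the
unit of the tensor algebra. -/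

open TensorProduct

section

variable {k A : Type*} [CommRing k] [Ring A] [Algebra k A]

theorem tmul_one_injective : Function.Injective (fun x : A ⊗[k] A => x ⊗ₜ[k] (1 : A)) := by
  refine Function.LeftInverse.injective
    (g := LinearMap.lTensor A (LinearMap.mul' k A) ∘ₗ (TensorProduct.assoc k A A A).toLinearMap)
    fun x => ?_
  induction x using TensorProduct.induction_on with
  | zero => simp
  | tmul a b => simp
  | add x y hx hy => simp_all [add_tmul]

theorem one_tmul_tmul_one_eq_one_tmul_one_tmul (h : ∀ a : A, a ⊗ₜ[k] (1 : A) = 1 ⊗ₜ a) (a : A) :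
    (1 : A) ⊗ₜ[k] a ⊗ₜ[k] (1 : A) = (1 : A) ⊗ₜ[k] (1 : A) ⊗ₜ[k] a :=
  (TensorProduct.assoc k A A A).injective <| by simp only [assoc_tmul, h a]

end

theorem trivial_canonical_R_matrix_iff_epimorphism
    (k A : Type*) [CommRing k] [Ring A] [Algebra k A] :
    (IsUnit ((1 : A) ⊗ₜ[k] (1 : A) ⊗ₜ[k] (1 : A)) ∧
     (∀ a : A, (1 : A) ⊗ₜ[k] (1 : A) ⊗ₜ[k] (a * 1)
        = ((1 : A) * a) ⊗ₜ[k] (1 : A) ⊗ₜ[k] (1 : A)) ∧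
     (∀ a : A, (a * 1) ⊗ₜ[k] (1 : A) ⊗ₜ[k] (1 : A)
        = (1 : A) ⊗ₜ[k] ((1 : A) * a) ⊗ₜ[k] (1 : A)) ∧
     (∀ a : A, (1 : A) ⊗ₜ[k] (a * 1) ⊗ₜ[k] (1 : A)
        = (1 : A) ⊗ₜ[k] (1 : A) ⊗ₜ[k] ((1 : A) * a)) ∧
     ((1 : A) ⊗ₜ[k] (1 : A) ⊗ₜ[k] (1 : A) ⊗ₜ[k] (1 : A)
        = ((1 : A) * 1) ⊗ₜ[k] (1 : A) ⊗ₜ[k] ((1 : A) * 1) ⊗ₜ[k] (1 : A)) ∧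
     ((1 : A) ⊗ₜ[k] (1 : A) ⊗ₜ[k] (1 : A) ⊗ₜ[k] (1 : A)
        = (1 : A) ⊗ₜ[k] ((1 : A) * 1) ⊗ₜ[k] (1 : A) ⊗ₜ[k] ((1 : A) * 1)))
    ↔ (∀ a : A, a ⊗ₜ[k] (1 : A) = (1 : A) ⊗ₜ[k] a) := by
  simp only [mul_one, one_mul, and_true]
  constructor
  · rintro ⟨-, -, hleft, -⟩ a
    exact tmul_one_injective (hleft a)
  · intro h
    have hleft (a : A) : a ⊗ₜ[k] (1 : A) ⊗ₜ[k] (1 : A) = (1 : A) ⊗ₜ[k] a ⊗ₜ[k] (1 : A) := by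
      rw [h a]
    have hright := one_tmul_tmul_one_eq_one_tmul_one_tmul h
    refine ⟨?_, fun a => ((hleft a).trans (hright a)).symm, hleft, hright⟩
    rw [← Algebra.TensorProduct.one_def, ← Algebra.TensorProduct.one_def]
    exact isUnit_one
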